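/- Let Λ be a row-finite k-graph with no sources satisfying the aperiodicity condition: for every v ∈ Λ^0 there is an aperiodic x ∈ Λ^∞(v). Then the aperiodic infinite paths are dense in Λ^∞ (with the cylinder set topology); equivalently, the path groupoid G_Λ is essentially free. -/

import Mathlib

/-!
The cylinders `Z(x(0, n))` form a neighbourhood basis at `x`, so it suffices to find an
aperiodic path in every cylinder `Z(λ)`. Take an aperiodic `z ∈ Λ^∞(s(λ))`; unique factorisation
of the morphisms `λ · z(0, m)` assembles into an infinite path `λz` with `σ^{d(λ)}(λz) = z`. As
shifts commute, a period `σ^m(λz) = σ^n(λz)` would give the period `σ^m z = σ^n z`, so `λz` is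
aperiodic.
-/

open CategoryTheory

universe v u

/-- A `k`-graph structure: a degree functor `d : Λ → ℕ^k` satisfying the unique
factorisation property.  Here a morphism `f : a ⟶ b` has range `r f = a` and
source `s f = b`, so that composition `f ≫ g` corresponds to the paper's `λμ`. -/
class KGraph (k : ℕ) (Λ : Type u) [Category.{v} Λ] where
  d : ∀ {a b : Λ}, (a ⟶ b) → (Fin k → ℕ)
  d_id : ∀ a : Λ, d (𝟙 a) = 0
  d_comp : ∀ {a b c : Λ} (f : a ⟶ b) (g : b ⟶ c), d (f ≫ g) = d f + d g
  factor : ∀ {a b : Λ} (f : a ⟶ b) (m n : Fin k → ℕ), d f = m + n →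
    ∃! t : Σ c : Λ, (a ⟶ c) × (c ⟶ b),
      d t.2.1 = m ∧ d t.2.2 = n ∧ t.2.1 ≫ t.2.2 = f

variable (k : ℕ) (Λ : Type u) [Category.{v} Λ] [KGraph k Λ]

/-- An infinite path in a `k`-graph `Λ`: a degree-preserving functor from
`Ω_k = {(m,n) ∈ ℕ^k × ℕ^k : m ≤ n}` to `Λ`.  `vert m` is the image `x(m)` of the
object `m`, and `edge m n h` is the image `x(m,n)` of the morphism `(m,n)`. -/
structure InfPath where
  vert : (Fin k → ℕ) → Λ
  edge : ∀ m n : Fin k → ℕ, m ≤ n → (vert m ⟶ vert n)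
  edge_self : ∀ m, edge m m le_rfl = 𝟙 (vert m)
  edge_comp : ∀ m n p (h₁ : m ≤ n) (h₂ : n ≤ p),
    edge m n h₁ ≫ edge n p h₂ = edge m p (h₁.trans h₂)
  deg : ∀ m n (h : m ≤ n), KGraph.d (k := k) (edge m n h) = n - m

variable {k Λ}

/-- The shift map `σ^p` on infinite paths: `σ^p(x)(m,n) = x(m+p, n+p)`. -/
def InfPath.shift (x : InfPath k Λ) (p : Fin k → ℕ) : InfPath k Λ where
  vert m := x.vert (m + p)
  edge m n h := x.edge (m + p) (n + p) (add_le_add h le_rfl)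
  edge_self m := x.edge_self (m + p)
  edge_comp m n q h₁ h₂ := x.edge_comp _ _ _ _ _
  deg m n h := by
    rw [x.deg]
    funext i
    simp [Nat.add_sub_add_right]

/-- The cylinder set `Z(λ) = {x ∈ Λ^∞ : x(0, d λ) = λ}` of a morphism `λ : a ⟶ b`. -/
def Zset {k : ℕ} {Λ : Type u} [Category.{v} Λ] [KGraph k Λ] {a b : Λ} (f : a ⟶ b) :
    Set (InfPath k Λ) :=
  {x | ∃ (h0 : x.vert 0 = a) (h1 : x.vert (KGraph.d (k := k) f) = b),
    x.edge 0 (KGraph.d (k := k) f) zero_le = eqToHom h0 ≫ f ≫ eqToHom h1.symm}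

/-- The cylinder-set topology on the infinite path space `Λ^∞`. -/
def pathTopology (k : ℕ) (Λ : Type u) [Category.{v} Λ] [KGraph k Λ] :
    TopologicalSpace (InfPath k Λ) :=
  TopologicalSpace.generateFrom {S | ∃ (a b : Λ) (f : a ⟶ b), S = Zset f}

/-- An infinite path is aperiodic if `σ^m x = σ^n x` implies `m = n`. -/
def Aperiodic' {k : ℕ} {Λ : Type u} [Category.{v} Λ] [KGraph k Λ]
    (x : InfPath k Λ) : Prop :=
  ∀ m n : Fin k → ℕ, x.shift m = x.shift n → m = n

namespace KGraph

theorem d_eqToHom {a b : Λ} (e : a = b) : d (k := k) (eqToHom e) = 0 := by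
  subst e; exact d_id a

theorem exists_eq_of_comp_eq {a b c c' : Λ} {g : a ⟶ c} {h : c ⟶ b} {g' : a ⟶ c'}
    {h' : c' ⟶ b} (hd : d (k := k) g = d (k := k) g') (hc : g ≫ h = g' ≫ h') :
    ∃ e : c = c', g' = g ≫ eqToHom e ∧ h' = eqToHom e.symm ≫ h := by
  have hd' : d (k := k) h = d (k := k) h' := by
    have := congrArg (d (k := k)) hc
    rw [d_comp, d_comp, hd] at this
    exact add_left_cancel this
  obtain ⟨_, _, huniq⟩ := factor (k := k) (g ≫ h) (d g) (d h) (d_comp g h)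
  have hsig : (⟨c', (g', h')⟩ : Σ c : Λ, (a ⟶ c) × (c ⟶ b)) = ⟨c, (g, h)⟩ :=
    (huniq _ ⟨hd.symm, hd'.symm, hc.symm⟩).trans (huniq _ ⟨rfl, rfl, rfl⟩).symm
  obtain ⟨⟩ := hsig
  exact ⟨rfl, by simp, by simp⟩

theorem epi (k : ℕ) [KGraph k Λ] {a b : Λ} (f : a ⟶ b) : Epi f where
  left_cancellation g g' hc := by
    obtain ⟨e, -, hg⟩ := exists_eq_of_comp_eq (k := k) rfl hc
    simpa using hg.symm

theorem exists_comp_eq_of_comp_eq {a b c c' : Λ} {u : a ⟶ c} {s : c ⟶ b} {w : a ⟶ c'}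
    {t : c' ⟶ b} (hle : d (k := k) u ≤ d (k := k) w) (hc : u ≫ s = w ≫ t) :
    ∃ g : c ⟶ c', u ≫ g = w := by
  have hds : d (k := k) s = (d (k := k) w - d (k := k) u) + d (k := k) t := by
    have hdc := congrArg (d (k := k)) hc
    rw [d_comp, d_comp] at hdc
    funext i
    have hi := congrFun hdc i
    have hlei := hle i
    simp only [Pi.add_apply, Pi.sub_apply] at hi hlei ⊢
    omega
  obtain ⟨⟨m, g, h⟩, ⟨hg, -, hgh⟩, -⟩ := factor (k := k) s _ _ hds
  obtain ⟨e, hw, -⟩ := exists_eq_of_comp_eq (k := k) (g := u ≫ g) (h := h) (g' := w) (h' := t)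
    (by rw [d_comp, hg, add_tsub_cancel_of_le hle]) (by rw [Category.assoc, hgh, hc])
  exact ⟨g ≫ eqToHom e, by rw [hw, Category.assoc]⟩

end KGraph

namespace InfPath

theorem ext {x y : InfPath k Λ} (hv : ∀ m, x.vert m = y.vert m)
    (he : ∀ m n (h : m ≤ n),
      x.edge m n h = eqToHom (hv m) ≫ y.edge m n h ≫ eqToHom (hv n).symm) :
    x = y := by
  obtain ⟨xv, xe, _, _, _⟩ := x
  obtain ⟨yv, ye, _, _, _⟩ := y
  obtain rfl : xv = yv := funext hv
  obtain rfl : xe = ye := by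
    funext m n h
    simpa using he m n h
  rfl

theorem edge_congr (x : InfPath k Λ) {p q p' q' : Fin k → ℕ} (hp : p = p') (hq : q = q')
    (h : p ≤ q) (h' : p' ≤ q') :
    x.edge p q h =
      eqToHom (congrArg x.vert hp) ≫ x.edge p' q' h' ≫ eqToHom (congrArg x.vert hq).symm := by
  subst hp hq
  simp

theorem shift_comm (x : InfPath k Λ) (p q : Fin k → ℕ) :
    (x.shift p).shift q = (x.shift q).shift p :=
  ext (fun m => congrArg x.vert (add_right_comm m q p))
    (fun _ _ _ => x.edge_congr (add_right_comm _ _ _) (add_right_comm _ _ _) _ _)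

section Cons

variable {z : InfPath k Λ} {a : Λ} (f : a ⟶ z.vert 0)

theorem d_comp_edge_zero (m : Fin k → ℕ) :
    KGraph.d (k := k) (f ≫ z.edge 0 m zero_le) = m + KGraph.d (k := k) f := by
  rw [KGraph.d_comp, z.deg, tsub_zero, add_comm]

/-- The first factor is the segment `(f z)(0, m)` of the path `f z = cons f`. -/
noncomputable def consFactor (m : Fin k → ℕ) : Σ c : Λ, (a ⟶ c) × (c ⟶ z.vert m) :=
  (KGraph.factor (f ≫ z.edge 0 m zero_le) m _ (d_comp_edge_zero f m)).exists.choose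

theorem consFactor_spec (m : Fin k → ℕ) :
    KGraph.d (k := k) (consFactor f m).2.1 = m ∧
      (consFactor f m).2.1 ≫ (consFactor f m).2.2 = f ≫ z.edge 0 m zero_le := by
  obtain ⟨hd, -, hc⟩ :=
    (KGraph.factor (f ≫ z.edge 0 m zero_le) m _ (d_comp_edge_zero f m)).exists.choose_spec
  exact ⟨hd, hc⟩

theorem consFactor_eq {m : Fin k → ℕ} {c : Λ} {g : a ⟶ c} {t : c ⟶ z.vert m}
    (hd : KGraph.d (k := k) g = m) (hc : g ≫ t = f ≫ z.edge 0 m zero_le) :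
    ∃ e : c = (consFactor f m).1, (consFactor f m).2.1 = g ≫ eqToHom e := by
  obtain ⟨e, he, -⟩ := KGraph.exists_eq_of_comp_eq (k := k)
    (hd.trans (consFactor_spec f m).1.symm) (hc.trans (consFactor_spec f m).2.symm)
  exact ⟨e, he⟩

theorem exists_consFactor_comp_eq {p q : Fin k → ℕ} (h : p ≤ q) :
    ∃ g : (consFactor f p).1 ⟶ (consFactor f q).1,
      (consFactor f p).2.1 ≫ g = (consFactor f q).2.1 := by
  refine KGraph.exists_comp_eq_of_comp_eq (k := k) (s := (consFactor f p).2.2 ≫ z.edge p q h)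
    (t := (consFactor f q).2.2) ?_ ?_
  · rw [(consFactor_spec f p).1, (consFactor_spec f q).1]
    exact h
  · rw [← Category.assoc, (consFactor_spec f p).2, (consFactor_spec f q).2, Category.assoc,
      z.edge_comp]

noncomputable def consEdge {p q : Fin k → ℕ} (h : p ≤ q) :
    (consFactor f p).1 ⟶ (consFactor f q).1 :=
  (exists_consFactor_comp_eq f h).choose

theorem consFactor_comp_consEdge {p q : Fin k → ℕ} (h : p ≤ q) :
    (consFactor f p).2.1 ≫ consEdge f h = (consFactor f q).2.1 :=
  (exists_consFactor_comp_eq f h).choose_spec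

noncomputable def cons : InfPath k Λ where
  vert m := (consFactor f m).1
  edge _ _ h := consEdge f h
  edge_self m := (KGraph.epi k _).left_cancellation _ _ <| by
    rw [consFactor_comp_consEdge, Category.comp_id]
  edge_comp _ _ _ h₁ h₂ := (KGraph.epi k _).left_cancellation _ _ <| by
    rw [← Category.assoc, consFactor_comp_consEdge, consFactor_comp_consEdge,
      consFactor_comp_consEdge]
  deg p q h := by
    have hd := congrArg (KGraph.d (k := k)) (consFactor_comp_consEdge f h)
    rw [KGraph.d_comp, (consFactor_spec f p).1, (consFactor_spec f q).1] at hd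
    exact eq_tsub_of_add_eq ((add_comm _ _).trans hd)

theorem cons_mem_Zset : cons f ∈ Zset f := by
  obtain ⟨e₀, h₀⟩ := consFactor_eq f (g := 𝟙 a) (t := f ≫ z.edge 0 0 zero_le)
    (KGraph.d_id a) (Category.id_comp _)
  obtain ⟨e₁, h₁⟩ := consFactor_eq f (g := f) (t := z.edge 0 _ zero_le) rfl rfl
  refine ⟨e₀.symm, e₁.symm, (KGraph.epi k (consFactor f 0).2.1).left_cancellation _ _ ?_⟩
  change _ ≫ consEdge f zero_le = _
  rw [consFactor_comp_consEdge, h₀, h₁]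
  dsimp only [cons]
  simp

theorem exists_consFactor_add_eq (m : Fin k → ℕ) :
    ∃ e : z.vert m = (consFactor f (m + KGraph.d (k := k) f)).1,
      (consFactor f (m + KGraph.d (k := k) f)).2.1 = f ≫ z.edge 0 m zero_le ≫ eqToHom e := by
  obtain ⟨e, he⟩ := consFactor_eq f (g := f ≫ z.edge 0 m zero_le)
    (t := z.edge m _ le_self_add) (d_comp_edge_zero f m) (by rw [Category.assoc, z.edge_comp])
  exact ⟨e, by rw [he, Category.assoc]⟩

theorem consFactor_add_fst (m : Fin k → ℕ) :
    (consFactor f (m + KGraph.d (k := k) f)).1 = z.vert m :=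
  (exists_consFactor_add_eq f m).choose.symm

theorem consFactor_add_snd (m : Fin k → ℕ) :
    (consFactor f (m + KGraph.d (k := k) f)).2.1 =
      f ≫ z.edge 0 m zero_le ≫ eqToHom (consFactor_add_fst f m).symm :=
  (exists_consFactor_add_eq f m).choose_spec

theorem cons_shift : (cons f).shift (KGraph.d (k := k) f) = z := by
  refine ext (consFactor_add_fst f) fun p q h => ?_
  refine (KGraph.epi k (consFactor f (p + KGraph.d (k := k) f)).2.1).left_cancellation _ _ ?_
  change _ ≫ consEdge f (add_le_add_left h _) = _
  rw [consFactor_comp_consEdge, consFactor_add_snd, consFactor_add_snd]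
  dsimp only [cons, shift]
  simp only [Category.assoc, eqToHom_trans_assoc, eqToHom_refl, Category.id_comp]
  rw [← Category.assoc (z.edge 0 p _), z.edge_comp]

end Cons

end InfPath

theorem Aperiodic'.of_shift {x : InfPath k Λ} {p : Fin k → ℕ} (hx : Aperiodic' (x.shift p)) :
    Aperiodic' x := fun m n hmn => hx m n (by rw [x.shift_comm, hmn, ← x.shift_comm])

theorem Zset_eqToHom_comp_comp {a a' b b' : Λ} (e : a' = a) (g : a ⟶ b) (e' : b = b') :
    Zset (k := k) (eqToHom e ≫ g ≫ eqToHom e') = Zset g := by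
  subst e e'
  simp

theorem Zset_comp_subset {a b c : Λ} (g : a ⟶ c) (h : c ⟶ b) :
    Zset (k := k) (g ≫ h) ⊆ Zset g := by
  rintro y ⟨h0, h1, hy⟩
  have hle : KGraph.d (k := k) g ≤ KGraph.d (k := k) (g ≫ h) := by
    rw [KGraph.d_comp]; exact le_self_add
  rw [← y.edge_comp 0 _ _ zero_le hle] at hy
  obtain ⟨e, hg, -⟩ := KGraph.exists_eq_of_comp_eq (k := k)
    (g := y.edge 0 _ zero_le) (g' := eqToHom h0 ≫ g) (h' := h ≫ eqToHom h1.symm)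
    (by rw [y.deg, KGraph.d_comp, KGraph.d_eqToHom, tsub_zero, zero_add])
    (by simpa using hy)
  refine ⟨h0, e, ?_⟩
  rw [← Category.assoc, hg]
  simp

theorem InfPath.Zset_edge_subset (x : InfPath k Λ) {m n : Fin k → ℕ} (h : m ≤ n) :
    Zset (k := k) (x.edge 0 n zero_le) ⊆ Zset (x.edge 0 m zero_le) := by
  rw [← x.edge_comp 0 m n zero_le h]
  exact Zset_comp_subset _ _

open Topology in
theorem InfPath.exists_Zset_edge_subset {U : Set (InfPath k Λ)}
    (hU : IsOpen[pathTopology k Λ] U) {x : InfPath k Λ} (hx : x ∈ U) :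
    ∃ n, Zset (x.edge 0 n zero_le) ⊆ U := by
  induction hU generalizing x with
  | basic S hS =>
    obtain ⟨a, b, g, rfl⟩ := hS
    obtain ⟨_, _, hxg⟩ := hx
    exact ⟨_, by rw [hxg, Zset_eqToHom_comp_comp]⟩
  | univ => exact ⟨0, Set.subset_univ _⟩
  | inter U V _ _ ihU ihV =>
    obtain ⟨m, hm⟩ := ihU hx.1
    obtain ⟨n, hn⟩ := ihV hx.2
    exact ⟨m ⊔ n, Set.subset_inter ((x.Zset_edge_subset le_sup_left).trans hm)
      ((x.Zset_edge_subset le_sup_right).trans hn)⟩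
  | sUnion S _ ih =>
    obtain ⟨V, hVS, hxV⟩ := hx
    obtain ⟨n, hn⟩ := ih V hVS hxV
    exact ⟨n, hn.trans (Set.subset_sUnion_of_mem hVS)⟩

theorem aperiodic_paths_dense_general
    (k : ℕ) (Λ : Type u) [Category.{v} Λ] [KGraph k Λ]
    (haper : ∀ v : Λ, ∃ x : InfPath k Λ, x.vert 0 = v ∧ Aperiodic' x) :
    @Dense _ (pathTopology k Λ) {x : InfPath k Λ | Aperiodic' x} := by
  let _ : TopologicalSpace (InfPath k Λ) := pathTopology k Λ
  refine dense_iff_inter_open.2 fun U hU ⟨x, hx⟩ => ?_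
  obtain ⟨n, hn⟩ := x.exists_Zset_edge_subset hU hx
  obtain ⟨z, hz0, hz⟩ := haper (x.vert n)
  let f := x.edge 0 n zero_le ≫ eqToHom hz0.symm
  have hf : Zset (k := k) f = Zset (x.edge 0 n zero_le) := by
    simpa using Zset_eqToHom_comp_comp rfl (x.edge 0 n zero_le) hz0.symm
  refine ⟨InfPath.cons f, hn (hf ▸ InfPath.cons_mem_Zset f), Aperiodic'.of_shift (p := KGraph.d (k := k) f) ?_⟩
  rwa [InfPath.cons_shift]

/-- If a row-finite `k`-graph with no sources satisfies the aperiodicity condition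
(every vertex receives an aperiodic infinite path), then the aperiodic paths are
dense in `Λ^∞` with the cylinder-set topology; i.e. the path groupoid is
essentially free. -/
theorem aperiodic_paths_dense
    (k : ℕ) (Λ : Type u) [Category.{v} Λ] [KGraph k Λ]
    (hrowfin : ∀ (v : Λ) (n : Fin k → ℕ),
      {t : Σ b : Λ, v ⟶ b | KGraph.d (k := k) t.2 = n}.Finite)
    (hnosource : ∀ (v : Λ) (n : Fin k → ℕ),
      {t : Σ b : Λ, v ⟶ b | KGraph.d (k := k) t.2 = n}.Nonempty)
    (haper : ∀ v : Λ, ∃ x : InfPath k Λ, x.vert 0 = v ∧ Aperiodic' x) :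
    @Dense _ (pathTopology k Λ) {x : InfPath k Λ | Aperiodic' x} :=
  aperiodic_paths_dense_general k Λ haper
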